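/- arXiv:2403.17563 — 4 statements merged into one kernel-verified Lean document; each statement's English description precedes it below -/
import Mathlib

section
/- Let β₁, β₂ > 0 be real numbers satisfying ν₀(β₁ + β₂ν₁) ≥ r₀, where ν₀ = √(1 − sin²1), ν₁ = −sin 2/(1 + cos 2), and r₀ ≈ 0.546302 is the unique positive root of r² + 2·cot(1)·r − 1 = 0. Let p be analytic on the open unit disk 𝔻 with p(0) = 1, and suppose that for every z ∈ 𝔻 the value 1 + β₁·z·p′(z) + β₂·z²·p″(z) lies in the set {w ∈ ℂ : w ≠ 0, w ≠ 2, |log(w/(2 − w))| < 1} (principal branch of the complex logarithm). Then for every z ∈ 𝔻, p(z) ∈ {1 + sin w : w ∈ 𝔻}, i.e. p(z) ≺ 1 + sin z. -/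
/-!
Put `F = 1 + β₁ z p' + β₂ z² p''`. The sigmoid image `{|log (w / (2 - w))| < 1}` lies in the
disk `|w - 1| < 18/25`, so the Schwarz lemma applied to `F - 1 = z (β₁ p' + β₂ z p'')` gives
`|β₁ p' + β₂ z p''| ≤ 18/25`. With `κ = β₁ / β₂`,
`d/ds (s^κ p'(s z)) = s^(κ-1) / β₂ * (β₁ p' + β₂ z p'')(s z)`, so integrating over `s ∈ [0, 1]`
yields `|p'| ≤ 18/(25 β₁)`, hence `|p z - 1| < 18/(25 β₁)`. The hypothesis on `β₁, β₂` forces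
`18/25 < β₁ sin 1`, and `sin` maps the unit disk onto a domain containing the disk of radius
`sin 1`, because `|sin w| ≥ sin 1` on the unit circle.
-/

open Metric

noncomputable def nu0 : ℝ := Real.sqrt (1 - Real.sin 1 ^ 2)

noncomputable def nu1 : ℝ := -Real.sin 2 / (1 + Real.cos 2)

open Set Real intervalIntegral MeasureTheory

theorem sin_one_pos : 0 < sin 1 := sin_pos_of_pos_of_le_one one_pos le_rfl

theorem norm_le_div_of_norm_mul_add_mul_deriv_le {f : ℂ → ℂ} {R a b M : ℝ} (ha : 0 < a)
    (hb : 0 < b) (hf : DifferentiableOn ℂ f (ball 0 R))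
    (hbound : ∀ w ∈ ball (0 : ℂ) R, ‖(a : ℂ) * f w + b * w * deriv f w‖ ≤ M)
    {z : ℂ} (hz : z ∈ ball (0 : ℂ) R) : ‖f z‖ ≤ M / a := by
  set κ := a / b
  have hκ : 0 < κ := div_pos ha hb
  have hseg : ∀ s ∈ Icc (0 : ℝ) 1, (s : ℂ) * z ∈ ball (0 : ℂ) R := by
    intro s hs
    rw [mem_ball_zero_iff, norm_mul, Complex.norm_real, Real.norm_of_nonneg hs.1]
    exact (mul_le_of_le_one_left (norm_nonneg z) hs.2).trans_lt (mem_ball_zero_iff.mp hz)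
  set L : ℂ → ℂ := fun w => a * f w + b * w * deriv f w
  set Φ : ℝ → ℂ := fun s => s ^ κ • f (s * z)
  set Φ' : ℝ → ℂ := fun s => (s ^ (κ - 1) / b) • L (s * z)
  have hderiv : ∀ s ∈ Ioo (0 : ℝ) 1, HasDerivAt Φ (Φ' s) s := by
    intro s hs
    have hfd := hf.differentiableAt (isOpen_ball.mem_nhds (hseg s (Ioo_subset_Icc_self hs)))
    have hfz : HasDerivAt (fun w : ℂ => f (w * z)) (deriv f (s * z) * z) s :=
      hfd.hasDerivAt.comp (s : ℂ) (hasDerivAt_mul_const z)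
    refine ((Real.hasDerivAt_rpow_const (p := κ) (Or.inl hs.1.ne')).smul
      hfz.comp_ofReal).congr_deriv ?_
    have hs0 : (s : ℂ) ≠ 0 := Complex.ofReal_ne_zero.mpr hs.1.ne'
    have hb0 : (b : ℂ) ≠ 0 := Complex.ofReal_ne_zero.mpr hb.ne'
    simp only [Φ', L, κ, Real.rpow_sub_one hs.1.ne', Complex.real_smul]
    push_cast
    field_simp
    ring
  have hcont : ContinuousOn Φ (Icc 0 1) :=
    (Real.continuous_rpow_const hκ.le).continuousOn.smul
      (hf.continuousOn.comp (by fun_prop) hseg)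
  have hL : ContinuousOn L (ball 0 R) :=
    (continuousOn_const.mul hf.continuousOn).add
      ((continuousOn_const.mul continuousOn_id).mul (hf.deriv isOpen_ball).continuousOn)
  have hint : IntervalIntegrable Φ' volume 0 1 := by
    refine ((intervalIntegrable_rpow' (by linarith : -1 < κ - 1)).div_const b).smul_continuousOn ?_
    rw [uIcc_of_le zero_le_one]
    exact hL.comp (by fun_prop) hseg
  have hnorm : ∀ s ∈ Ioc (0 : ℝ) 1, ‖Φ' s‖ ≤ M / b * s ^ (κ - 1) := by
    intro s hs
    have hc : 0 ≤ s ^ (κ - 1) / b := div_nonneg (Real.rpow_nonneg hs.1.le _) hb.le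
    calc ‖Φ' s‖ = s ^ (κ - 1) / b * ‖L (s * z)‖ := by
          rw [norm_smul, Real.norm_of_nonneg hc]
      _ ≤ s ^ (κ - 1) / b * M :=
          mul_le_mul_of_nonneg_left (hbound _ (hseg s (Ioc_subset_Icc_self hs))) hc
      _ = M / b * s ^ (κ - 1) := by ring
  calc ‖f z‖ = ‖Φ 1 - Φ 0‖ := by simp [Φ, Real.zero_rpow hκ.ne']
    _ = ‖∫ s in (0 : ℝ)..1, Φ' s‖ := by
      rw [integral_eq_sub_of_hasDeriv_right_of_le zero_le_one hcont
        (fun s hs => (hderiv s hs).hasDerivWithinAt) hint]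
    _ ≤ ∫ s in (0 : ℝ)..1, M / b * s ^ (κ - 1) :=
      norm_integral_le_of_norm_le zero_le_one (ae_of_all _ hnorm)
        ((intervalIntegrable_rpow' (by linarith)).const_mul _)
    _ = M / a := by
      rw [intervalIntegral.integral_const_mul, integral_rpow (Or.inl (by linarith))]
      simp [Real.zero_rpow hκ.ne', κ]
      field_simp

theorem norm_le_div_of_mapsTo_ball_mul {k : ℂ → ℂ} {R c : ℝ}
    (hk : DifferentiableOn ℂ k (ball 0 R))
    (hmaps : MapsTo (fun w => w * k w) (ball 0 R) (closedBall 0 c)) {z : ℂ}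
    (hz : z ∈ ball (0 : ℂ) R) : ‖k z‖ ≤ c / R := by
  have hd : DifferentiableOn ℂ (fun w => w * k w) (ball 0 R) := differentiableOn_id.mul hk
  have hslope := Complex.norm_dslope_le_div_of_mapsTo_ball hd (by simpa using hmaps) hz
  rcases eq_or_ne z 0 with rfl | hz0
  · have hk0 := (hk.differentiableAt (isOpen_ball.mem_nhds hz)).hasDerivAt
    rwa [dslope_same, ((hasDerivAt_id' 0).fun_mul hk0).deriv, one_mul, zero_mul,
      add_zero] at hslope
  · simpa [dslope_of_ne _ hz0, slope_def_field, hz0] using hslope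

theorem sq_sub_sin_sq_le {x : ℝ} (hx : |x| ≤ 1) : x ^ 2 - sin x ^ 2 ≤ 1 - sin 1 ^ 2 := by
  have habs : sin |x| ^ 2 = sin x ^ 2 := by rcases abs_choice x with h | h <;> simp [h]
  rw [← sq_abs x, ← habs]
  have hlip : sin 1 - sin |x| ≤ 1 - |x| := by
    simpa [abs_of_nonneg (sub_nonneg.mpr hx)] using (abs_le.mp (abs_sin_sub_sin_le 1 |x|)).2
  have hsin : 0 ≤ sin |x| :=
    sin_nonneg_of_nonneg_of_le_pi (abs_nonneg x) (hx.trans (by linarith [pi_gt_three]))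
  -- `sin 1 ^ 2 - sin |x| ^ 2 = (sin 1 - sin |x|) (sin 1 + sin |x|) ≤ (1 - |x|) (1 + |x|)`
  nlinarith [sin_le (abs_nonneg x), sin_le zero_le_one, sin_one_pos]

theorem sin_one_le_norm_sin {w : ℂ} (hw : ‖w‖ = 1) : sin 1 ≤ ‖Complex.sin w‖ := by
  set x := w.re
  set y := w.im
  have hxy : x ^ 2 + y ^ 2 = 1 := by
    rw [sq, sq, ← Complex.normSq_apply, Complex.normSq_eq_norm_sq, hw]; norm_num
  have hx : |x| ≤ 1 := abs_le_one_iff_mul_self_le_one.mpr (by nlinarith)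
  have hy : y ^ 2 ≤ sinh y ^ 2 := by
    rw [← sq_abs, ← sq_abs (sinh y), abs_sinh]
    exact pow_le_pow_left₀ (abs_nonneg y) (self_le_sinh_iff.mpr (abs_nonneg y)) 2
  have hnorm : ‖Complex.sin w‖ ^ 2 = sin x ^ 2 + sinh y ^ 2 := by
    rw [← Complex.normSq_eq_norm_sq, Complex.sin_eq, ← Complex.ofReal_sin, ← Complex.ofReal_cos,
      ← Complex.ofReal_sinh, ← Complex.ofReal_cosh]
    simp only [← Complex.ofReal_mul, Complex.normSq_add_mul_I]
    nlinarith [sin_sq_add_cos_sq x, cosh_sq y]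
  -- `sin x ^ 2 + sinh y ^ 2 ≥ sin x ^ 2 + (1 - x ^ 2) ≥ sin 1 ^ 2`
  nlinarith [sq_sub_sin_sq_le hx, norm_nonneg (Complex.sin w), sin_one_pos]

theorem norm_exp_sub_one_lt {u : ℂ} (hu : ‖u‖ < 1) :
    ‖Complex.exp u - 1‖ < 18 / 25 * ‖Complex.exp u + 1‖ := by
  obtain ⟨a, ha_def⟩ : ∃ a, a = Real.exp u.re := ⟨_, rfl⟩
  have ha : 0 < a := ha_def ▸ Real.exp_pos _
  have hre : |u.re| < 1 := (Complex.abs_re_le_norm u).trans_lt hu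
  have hlo : Real.exp (-1) < a := ha_def ▸ Real.exp_lt_exp.mpr (neg_lt_of_abs_lt hre)
  have hhi : a < Real.exp 1 := ha_def ▸ Real.exp_lt_exp.mpr (lt_of_abs_lt hre)
  have he : Real.exp 1 * Real.exp (-1) = 1 := by rw [← Real.exp_add]; norm_num
  -- `(e - a) (a - e⁻¹) > 0`
  have hquad : a ^ 2 + 1 < 31 / 10 * a := by
    nlinarith [mul_pos (sub_pos.mpr hhi) (sub_pos.mpr hlo), Real.exp_one_lt_d9,
      Real.exp_neg_one_lt_d9]
  have hcos : 1 / 2 < Real.cos u.im := by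
    have him : |u.im| < 1 := (Complex.abs_im_le_norm u).trans_lt hu
    nlinarith [Real.one_sub_sq_div_two_le_cos (x := u.im), sq_abs u.im, abs_nonneg u.im]
  have hsq : ‖Complex.exp u - 1‖ ^ 2 < (18 / 25 * ‖Complex.exp u + 1‖) ^ 2 := by
    have hpyth : a ^ 2 * (Real.sin u.im ^ 2 + Real.cos u.im ^ 2) = a ^ 2 := by
      rw [Real.sin_sq_add_cos_sq, mul_one]
    simp only [mul_pow, Complex.sq_norm, Complex.normSq_apply, Complex.sub_re, Complex.sub_im,
      Complex.add_re, Complex.add_im, Complex.exp_re, Complex.exp_im, Complex.one_re,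
      Complex.one_im, ← ha_def]
    nlinarith [mul_pos ha (sub_pos.mpr hcos)]
  exact lt_of_pow_lt_pow_left₀ 2 (by positivity) hsq

theorem norm_sub_one_lt_of_norm_log_lt {F : ℂ} (h0 : F ≠ 0) (h2 : F ≠ 2)
    (hlog : ‖Complex.log (F / (2 - F))‖ < 1) : ‖F - 1‖ < 18 / 25 := by
  have h2F : 2 - F ≠ 0 := sub_ne_zero.mpr h2.symm
  have hE : Complex.exp (Complex.log (F / (2 - F))) * (2 - F) = F := by
    rw [Complex.exp_log (div_ne_zero h0 h2F), div_mul_cancel₀ _ h2F]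
  have hlt := norm_exp_sub_one_lt hlog
  rw [← show (F - 1) * (Complex.exp (Complex.log (F / (2 - F))) + 1) = _ - 1 by
    linear_combination -hE, norm_mul] at hlt
  exact lt_of_mul_lt_mul_right hlt (norm_nonneg _)

theorem nu0_eq_cos_one : nu0 = cos 1 := by
  rw [nu0, ← cos_sq', sqrt_sq cos_one_pos.le]

theorem nu1_eq_neg_tan_one : nu1 = -tan 1 := by
  have h2 : (2 : ℝ) = 2 * 1 := by norm_num
  rw [nu1, h2, sin_two_mul, cos_two_mul, tan_eq_sin_div_cos]
  field_simp [cos_one_pos.ne']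
  ring

theorem cot_one_sq_lt : (cos 1 / sin 1) ^ 2 < 1 / 2 := by
  rw [div_pow, div_lt_iff₀ (pow_pos sin_one_pos 2)]
  nlinarith [cos_one_le, cos_one_pos, sin_sq_add_cos_sq 1]

theorem mul_cot_one_lt_of_sq_add_mul_sub_one_eq_zero {r : ℝ} (hr : 0 < r)
    (h : r ^ 2 + 2 * (cos 1 / sin 1) * r - 1 = 0) : 18 / 25 * (cos 1 / sin 1) < r := by
  have ht : 0 < cos 1 / sin 1 := div_pos cos_one_pos sin_one_pos
  -- at `18 / 25 * cot 1` the quadratic is `cot 1 ^ 2 * ((18 / 25) ^ 2 + 36 / 25) - 1 < 0`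
  nlinarith [cot_one_sq_lt]

theorem lt_mul_sin_one_of_nu0_mul_ge {β₁ β₂ r₀ : ℝ} (hβ₂ : 0 < β₂) (hr₀pos : 0 < r₀)
    (hr₀ : r₀ ^ 2 + 2 * (cos 1 / sin 1) * r₀ - 1 = 0) (hcond : nu0 * (β₁ + β₂ * nu1) ≥ r₀) :
    18 / 25 < β₁ * sin 1 := by
  have hsin := sin_one_pos
  have hcos := cos_one_pos
  have hlin : nu0 * (β₁ + β₂ * nu1) = β₁ * cos 1 - β₂ * sin 1 := by
    rw [nu0_eq_cos_one, nu1_eq_neg_tan_one, tan_eq_sin_div_cos]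
    field_simp
    ring
  have hr := mul_cot_one_lt_of_sq_add_mul_sub_one_eq_zero hr₀pos hr₀
  rw [hlin] at hcond
  have hr' : 18 / 25 * cos 1 < r₀ * sin 1 := by
    have := mul_lt_mul_of_pos_right hr hsin
    rwa [mul_assoc, div_mul_cancel₀ _ hsin.ne'] at this
  by_contra! hβ₁
  nlinarith [mul_le_mul_of_nonneg_right hβ₁ hcos.le, mul_le_mul_of_nonneg_right hcond hsin.le,
    mul_pos hβ₂ hsin]

theorem ball_sin_one_subset_sin_image : ball (0 : ℂ) (sin 1) ⊆ Complex.sin '' ball 0 1 := by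
  have hopen : IsOpen (Complex.sin '' ball 0 1) := by
    rcases Complex.analyticOnNhd_sin.is_constant_or_isOpenMap with ⟨w, hw⟩ | hopen
    · have := (hw 0).trans (hw (π / 2)).symm
      simp [← Complex.ofReal_ofNat, ← Complex.ofReal_div, ← Complex.ofReal_sin] at this
    · exact hopen _ isOpen_ball
  have hclosure : closure (Complex.sin '' ball 0 1) ⊆ Complex.sin '' closedBall 0 1 :=
    closure_minimal (image_mono ball_subset_closedBall)
      ((isCompact_closedBall 0 1).image Complex.continuous_sin).isClosed
  refine (convex_ball 0 _).isPreconnected.subset_of_closure_inter_subset hopen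
    ⟨0, ?_, 0, by simp, by simp⟩ ?_
  · simpa using sin_one_pos
  rintro v ⟨hv, hvB⟩
  obtain ⟨w, hw, rfl⟩ := hclosure hv
  refine ⟨w, ?_, rfl⟩
  rcases (mem_closedBall_zero_iff.mp hw).lt_or_eq with h | h
  · exact mem_ball_zero_iff.mpr h
  · exact absurd (mem_ball_zero_iff.mp hvB) (not_lt.mpr (sin_one_le_norm_sin h))

theorem stmt2_general (β₁ β₂ : ℝ) (hβ₂ : 0 < β₂)
    (r₀ : ℝ) (hr₀pos : 0 < r₀)
    (hr₀ : r₀ ^ 2 + 2 * (Real.cos 1 / Real.sin 1) * r₀ - 1 = 0)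
    (hcond : nu0 * (β₁ + β₂ * nu1) ≥ r₀)
    (p : ℂ → ℂ) (hp : AnalyticOnNhd ℂ p (ball 0 1)) (hp0 : p 0 = 1)
    (hsub : ∀ z ∈ ball (0 : ℂ) 1,
      (1 + (β₁ : ℂ) * z * deriv p z + (β₂ : ℂ) * z ^ 2 * deriv (deriv p) z) ≠ 0 ∧ (1 + (β₁ : ℂ) * z * deriv p z + (β₂ : ℂ) * z ^ 2 * deriv (deriv p) z) ≠ 2 ∧
        ‖Complex.log ((1 + (β₁ : ℂ) * z * deriv p z + (β₂ : ℂ) * z ^ 2 * deriv (deriv p) z) / (2 - (1 + (β₁ : ℂ) * z * deriv p z + (β₂ : ℂ) * z ^ 2 * deriv (deriv p) z)))‖ < 1) :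
    ∀ z ∈ ball (0 : ℂ) 1, ∃ w ∈ ball (0 : ℂ) 1, p z = 1 + Complex.sin w := by
  intro z hz
  have hβ := lt_mul_sin_one_of_nu0_mul_ge hβ₂ hr₀pos hr₀ hcond
  have hβ₁ : 0 < β₁ := pos_of_mul_pos_left (by linarith) sin_one_pos.le
  have hp' : DifferentiableOn ℂ (deriv p) (ball 0 1) := hp.deriv.differentiableOn
  have hmaps : MapsTo (fun w => w * ((β₁ : ℂ) * deriv p w + β₂ * w * deriv (deriv p) w))
      (ball 0 1) (closedBall 0 (18 / 25)) := by
    intro v hv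
    obtain ⟨h0, h2, hlog⟩ := hsub v hv
    rw [mem_closedBall_zero_iff]
    exact (congrArg norm (by ring)).trans_le (norm_sub_one_lt_of_norm_log_lt h0 h2 hlog).le
  have hk : ∀ w ∈ ball (0 : ℂ) 1,
      ‖(β₁ : ℂ) * deriv p w + β₂ * w * deriv (deriv p) w‖ ≤ 18 / 25 := by
    intro w hw
    simpa using norm_le_div_of_mapsTo_ball_mul ((differentiableOn_const _).mul hp' |>.add
      (((differentiableOn_const _).mul differentiableOn_id).mul (hp'.deriv isOpen_ball))) hmaps hw
  have hderiv : ∀ w ∈ ball (0 : ℂ) 1, ‖deriv p w‖ ≤ 18 / 25 / β₁ := fun w hw =>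
    norm_le_div_of_norm_mul_add_mul_deriv_le hβ₁ hβ₂ hp' hk hw
  have hlip := (convex_ball (0 : ℂ) 1).norm_image_sub_le_of_norm_deriv_le
    (fun w hw => hp.differentiableOn.differentiableAt (isOpen_ball.mem_nhds hw)) hderiv
    (mem_ball_self one_pos) hz
  have hpz : p z - 1 ∈ ball (0 : ℂ) (sin 1) := by
    rw [hp0, sub_zero] at hlip
    rw [mem_ball_zero_iff]
    calc ‖p z - 1‖ ≤ 18 / 25 / β₁ * ‖z‖ := hlip
      _ ≤ 18 / 25 / β₁ := mul_le_of_le_one_right (by positivity) (mem_ball_zero_iff.mp hz).le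
      _ < sin 1 := by rwa [div_lt_iff₀ hβ₁, mul_comm]
  obtain ⟨w, hw, hsin⟩ := ball_sin_one_subset_sin_image hpz
  exact ⟨w, hw, by rw [hsin]; ring⟩

theorem stmt2 (β₁ β₂ : ℝ) (hβ₁ : 0 < β₁) (hβ₂ : 0 < β₂)
    (r₀ : ℝ) (hr₀pos : 0 < r₀)
    (hr₀ : r₀ ^ 2 + 2 * (Real.cos 1 / Real.sin 1) * r₀ - 1 = 0)
    (hcond : nu0 * (β₁ + β₂ * nu1) ≥ r₀)
    (p : ℂ → ℂ) (hp : AnalyticOnNhd ℂ p (ball 0 1)) (hp0 : p 0 = 1)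
    (hsub : ∀ z ∈ ball (0 : ℂ) 1,
      (1 + (β₁ : ℂ) * z * deriv p z + (β₂ : ℂ) * z ^ 2 * deriv (deriv p) z) ≠ 0 ∧ (1 + (β₁ : ℂ) * z * deriv p z + (β₂ : ℂ) * z ^ 2 * deriv (deriv p) z) ≠ 2 ∧
        ‖Complex.log ((1 + (β₁ : ℂ) * z * deriv p z + (β₂ : ℂ) * z ^ 2 * deriv (deriv p) z) / (2 - (1 + (β₁ : ℂ) * z * deriv p z + (β₂ : ℂ) * z ^ 2 * deriv (deriv p) z)))‖ < 1) :
    ∀ z ∈ ball (0 : ℂ) 1, ∃ w ∈ ball (0 : ℂ) 1, p z = 1 + Complex.sin w :=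
  stmt2_general β₁ β₂ hβ₂ r₀ hr₀pos hr₀ hcond p hp hp0 hsub
end

section
/- Let β₁, β₂ > 0 be real numbers satisfying ν₀(β₁ + β₂ν₁) ≥ √2, where ν₀ = √(1 − sin²1) and ν₁ = −sin 2/(1 + cos 2). Let p be analytic on the open unit disk 𝔻 with p(0) = 1, and suppose that for every z ∈ 𝔻 the value 1 + β₁·z·p′(z) + β₂·z²·p″(z) lies in the set {w ∈ ℂ : |w² − 1| < 2|w|}. Then for every z ∈ 𝔻, p(z) ∈ {1 + sin w : w ∈ 𝔻}, i.e. p(z) ≺ 1 + sin z. -/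
open Metric Complex Set MeasureTheory

lemma nu0_eq : nu0 = Real.cos 1 := by
  rw [nu0, ← Real.cos_sq', Real.sqrt_sq Real.cos_one_pos.le]

lemma nu0_mul_nu1 : nu0 * nu1 = -Real.sin 1 := by
  have hcos := Real.cos_one_pos.ne'
  rw [nu0_eq, nu1, show (2 : ℝ) = 2 * 1 by norm_num, Real.sin_two_mul, Real.cos_two_mul]
  field_simp
  ring

lemma three_le_sqrt_two_mul {β₁ β₂ : ℝ} (hβ₂ : 0 < β₂) (hcond : nu0 * (β₁ + β₂ * nu1) ≥ √2) :
    3 ≤ √2 * β₁ := by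
  have h : √2 + β₂ * Real.sin 1 ≤ β₁ * Real.cos 1 := by
    rw [mul_add, mul_left_comm, nu0_mul_nu1, nu0_eq] at hcond
    linarith
  have hsin : 0 < Real.sin 1 :=
    Real.sin_pos_of_pos_of_lt_pi one_pos (by linarith [Real.pi_gt_three])
  nlinarith [Real.sq_sqrt (zero_le_two (α := ℝ)), Real.sqrt_nonneg 2, Real.cos_one_le,
    Real.cos_one_pos, mul_pos hβ₂ hsin]

lemma ne_zero_of_norm_sq_sub_one_lt {w : ℂ} (h : ‖w ^ 2 - 1‖ < 2 * ‖w‖) : w ≠ 0 := by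
  rintro rfl
  norm_num at h

lemma re_ne_zero_of_norm_sq_sub_one_lt {w : ℂ} (h : ‖w ^ 2 - 1‖ < 2 * ‖w‖) : w.re ≠ 0 := by
  intro hre
  have hw : w = (w.im : ℂ) * I := Complex.ext (by simp [hre]) (by simp)
  have hsq : ((w.im : ℂ) * I) ^ 2 - 1 = ((-(w.im ^ 2 + 1) : ℝ) : ℂ) := by
    push_cast; linear_combination (w.im : ℂ) ^ 2 * I_sq
  rw [hw, hsq, norm_real, norm_mul, norm_real, norm_I, Real.norm_eq_abs, Real.norm_eq_abs,
    abs_neg, abs_of_pos (by positivity)] at h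
  nlinarith [sq_abs w.im, sq_nonneg (|w.im| - 1)]

lemma norm_sub_inv_div_two_lt_one {w : ℂ} (h : ‖w ^ 2 - 1‖ < 2 * ‖w‖) : ‖(w - w⁻¹) / 2‖ < 1 := by
  have hw := ne_zero_of_norm_sq_sub_one_lt h
  rw [show (w - w⁻¹) / 2 = (w ^ 2 - 1) / (2 * w) by field_simp, norm_div, norm_mul,
    Complex.norm_two, div_lt_one (by positivity)]
  exact h

lemma norm_sub_one_le_of_re_pos {w : ℂ} (hw : 0 < w.re) :
    ‖w - 1‖ ≤ ‖(w - w⁻¹) / 2‖ + ‖(w - w⁻¹) / 2‖ ^ 2 := by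
  have hw0 : w ≠ 0 := fun h => by simp [h] at hw
  set ω := (w - w⁻¹) / 2
  set T := (w + w⁻¹) / 2
  have hT : 1 ≤ ‖T + 1‖ := by
    have : 0 ≤ w.re / normSq w := div_nonneg hw.le (normSq_nonneg w)
    refine le_trans ?_ (re_le_norm _)
    simp only [T, add_re, div_re, one_re, inv_re]
    norm_num
    linarith
  have hprod : (T - 1) * (T + 1) = ω ^ 2 := by
    simp only [T, ω]; field_simp; ring
  have hT1 : ‖T - 1‖ ≤ ‖ω‖ ^ 2 := by
    rw [← norm_pow, ← hprod, norm_mul]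
    exact le_mul_of_one_le_right (norm_nonneg _) hT
  calc ‖w - 1‖ = ‖ω + (T - 1)‖ := by congr 1; simp only [T, ω]; ring
    _ ≤ ‖ω‖ + ‖T - 1‖ := norm_add_le _ _
    _ ≤ ‖ω‖ + ‖ω‖ ^ 2 := by gcongr

theorem norm_sub_one_le_of_norm_sq_sub_one_lt {W : ℂ → ℂ} (hW : DifferentiableOn ℂ W (ball 0 1))
    (hW0 : W 0 = 1) (hlune : ∀ z ∈ ball (0 : ℂ) 1, ‖W z ^ 2 - 1‖ < 2 * ‖W z‖)
    {z : ℂ} (hz : z ∈ ball (0 : ℂ) 1) : ‖W z - 1‖ ≤ ‖z‖ + ‖z‖ ^ 2 := by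
  have hre : 0 < (W z).re := by
    by_contra! hle
    obtain ⟨c, hc, hc0⟩ := (convex_ball (0 : ℂ) 1).isPreconnected.intermediate_value hz
      (mem_ball_self one_pos) (continuous_re.comp_continuousOn hW.continuousOn)
      ⟨hle, by simp [hW0]⟩
    exact re_ne_zero_of_norm_sq_sub_one_lt (hlune c hc) hc0
  have hω : ‖(W z - (W z)⁻¹) / 2‖ ≤ ‖z‖ := by
    refine Complex.norm_le_norm_of_mapsTo_ball (f := fun z => (W z - (W z)⁻¹) / 2)
      ((hW.sub (hW.inv fun u hu => ne_zero_of_norm_sq_sub_one_lt (hlune u hu))).div_const 2)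
      (fun u hu => mem_closedBall_zero_iff.2 (norm_sub_inv_div_two_lt_one (hlune u hu)).le)
      (by simp [hW0]) (mem_ball_zero_iff.1 hz)
  calc ‖W z - 1‖ ≤ ‖(W z - (W z)⁻¹) / 2‖ + ‖(W z - (W z)⁻¹) / 2‖ ^ 2 :=
        norm_sub_one_le_of_re_pos hre
    _ ≤ ‖z‖ + ‖z‖ ^ 2 := by gcongr

noncomputable def complexArcsin (v : ℂ) : ℂ := -I * log (I * v + (1 - v ^ 2) ^ (2⁻¹ : ℂ))

lemma mul_add_sqrt_one_sub_sq (v : ℂ) :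
    (I * v + (1 - v ^ 2) ^ (2⁻¹ : ℂ)) * ((1 - v ^ 2) ^ (2⁻¹ : ℂ) - I * v) = 1 := by
  linear_combination (cpow_ofNat_inv_pow (1 - v ^ 2) 2) - v ^ 2 * I_sq

theorem sin_complexArcsin (v : ℂ) : sin (complexArcsin v) = v := by
  have hprod := mul_add_sqrt_one_sub_sq v
  have hpos : exp (complexArcsin v * I) = I * v + (1 - v ^ 2) ^ (2⁻¹ : ℂ) := by
    rw [complexArcsin, mul_right_comm, neg_mul, I_mul_I, neg_neg, one_mul,
      exp_log (left_ne_zero_of_mul_eq_one hprod)]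
  have hneg : exp (-complexArcsin v * I) = (1 - v ^ 2) ^ (2⁻¹ : ℂ) - I * v := by
    rw [neg_mul, exp_neg, hpos]
    exact inv_eq_of_mul_eq_one_right hprod
  rw [sin, hpos, hneg]
  linear_combination (-v) * I_sq

lemma add_sqrt_one_sub_sq_mem_slitPlane (v : ℂ) :
    I * v + (1 - v ^ 2) ^ (2⁻¹ : ℂ) ∈ slitPlane := by
  have hre := congrArg re (mul_add_sqrt_one_sub_sq v)
  have hS : 0 ≤ ((1 - v ^ 2) ^ (2⁻¹ : ℂ)).re := by rw [cpow_inv_two_re]; positivity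
  rw [mem_slitPlane_iff]
  by_contra! h
  simp only [mul_re, add_re, sub_re, h.2, one_re] at hre hS h
  nlinarith

lemma one_sub_sq_mem_slitPlane {v : ℂ} (hv : ‖v‖ < 1) : 1 - v ^ 2 ∈ slitPlane := by
  have : (v ^ 2).re < 1 := (re_le_norm _).trans_lt (by rw [norm_pow]; nlinarith [norm_nonneg v])
  exact mem_slitPlane_iff.2 (Or.inl (by simpa using this))

theorem hasDerivAt_complexArcsin {v : ℂ} (hv : ‖v‖ < 1) :
    HasDerivAt complexArcsin ((1 - v ^ 2) ^ (2⁻¹ : ℂ))⁻¹ v := by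
  have hx : 1 - v ^ 2 ≠ 0 := slitPlane_ne_zero (one_sub_sq_mem_slitPlane hv)
  have hsq : HasDerivAt (fun u : ℂ => 1 - u ^ 2) (-(2 * v)) v := by
    simpa using (hasDerivAt_pow 2 v).const_sub 1
  have hS := hsq.cpow_const (c := 2⁻¹) (one_sub_sq_mem_slitPlane hv)
  have hlog := (((hasDerivAt_id' v).const_mul I).add hS).clog
    (add_sqrt_one_sub_sq_mem_slitPlane v)
  refine (hlog.const_mul (-I)).congr_deriv ?_
  have hζ0 := left_ne_zero_of_mul_eq_one (mul_add_sqrt_one_sub_sq v)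
  have hSsq : ((1 - v ^ 2) ^ (2⁻¹ : ℂ)) ^ 2 = 1 - v ^ 2 := cpow_ofNat_inv_pow _ 2
  simp only [Pi.add_apply, cpow_sub _ _ hx, cpow_one]
  generalize (1 - v ^ 2) ^ (2⁻¹ : ℂ) = S at hζ0 hSsq ⊢
  have hS0 : S ≠ 0 := by rintro rfl; exact hx (by simpa using hSsq.symm)
  rw [← hSsq]
  field_simp
  linear_combination (-S) * I_sq

lemma one_sub_norm_sq_le_norm_cpow_inv_two_sq (u : ℂ) :
    1 - ‖u‖ ^ 2 ≤ ‖(1 - u ^ 2) ^ (2⁻¹ : ℂ)‖ ^ 2 := by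
  rw [← norm_pow ((1 - u ^ 2) ^ (2⁻¹ : ℂ)), cpow_ofNat_inv_pow, ← norm_pow u, ← norm_one (α := ℂ)]
  exact norm_sub_norm_le _ _

theorem norm_complexArcsin_lt_one {v : ℂ} (hv : ‖v‖ < √2 / 2) : ‖complexArcsin v‖ < 1 := by
  set m := ‖v‖
  have hm : 2 * m ^ 2 < 1 := by
    have := Real.sq_sqrt (zero_le_two (α := ℝ))
    nlinarith [norm_nonneg v, Real.sqrt_nonneg 2]
  have hsqrt : 0 < √(1 - m ^ 2) := Real.sqrt_pos.2 (by linarith)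
  have hderiv : ∀ u ∈ closedBall (0 : ℂ) m, HasDerivAt complexArcsin
      ((1 - u ^ 2) ^ (2⁻¹ : ℂ))⁻¹ u := fun u hu =>
    hasDerivAt_complexArcsin ((mem_closedBall_zero_iff.1 hu).trans_lt (by nlinarith))
  have hbound : ∀ u ∈ closedBall (0 : ℂ) m, ‖deriv complexArcsin u‖ ≤ (√(1 - m ^ 2))⁻¹ := by
    intro u hu
    rw [(hderiv u hu).deriv, norm_inv]
    refine inv_anti₀ hsqrt (Real.sqrt_le_iff.2 ⟨norm_nonneg _, ?_⟩)
    have := one_sub_norm_sq_le_norm_cpow_inv_two_sq u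
    have := mem_closedBall_zero_iff.1 hu
    nlinarith [norm_nonneg u]
  have := (convex_closedBall (0 : ℂ) m).norm_image_sub_le_of_norm_deriv_le
    (fun u hu => (hderiv u hu).differentiableAt) hbound (mem_closedBall_self (norm_nonneg v))
    (mem_closedBall_zero_iff.2 le_rfl)
  have h0 : complexArcsin 0 = 0 := by simp [complexArcsin]
  rw [h0, sub_zero, sub_zero, inv_mul_eq_div] at this
  refine this.trans_lt ((div_lt_one hsqrt).2 ((Real.lt_sqrt (norm_nonneg v)).2 (by linarith)))

noncomputable def eulerOp (β₁ β₂ : ℝ) (p : ℂ → ℂ) (z : ℂ) : ℂ :=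
  β₁ * z * deriv p z + β₂ * z ^ 2 * deriv (deriv p) z

lemma AnalyticOnNhd.eulerOp {p : ℂ → ℂ} {s : Set ℂ} (hp : AnalyticOnNhd ℂ p s) (β₁ β₂ : ℝ) :
    AnalyticOnNhd ℂ (eulerOp β₁ β₂ p) s := fun z hz =>
  ((analyticAt_const.mul analyticAt_id).mul (hp.deriv z hz)).add
    ((analyticAt_const.mul (analyticAt_id.pow 2)).mul (hp.deriv.deriv z hz))

lemma intervalIntegrable_mul_rpow_sub_one_add_mul_rpow {k : ℝ} (hk : 0 < k) (a b : ℝ) :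
    IntervalIntegrable (fun s : ℝ => a * s ^ (k - 1) + b * s ^ k) volume 0 1 :=
  ((intervalIntegral.intervalIntegrable_rpow' (by linarith)).const_mul a).add
    ((intervalIntegral.intervalIntegrable_rpow' (by linarith)).const_mul b)

lemma integral_mul_rpow_sub_one_add_mul_rpow {k : ℝ} (hk : 0 < k) (a b : ℝ) :
    ∫ s in (0 : ℝ)..1, (a * s ^ (k - 1) + b * s ^ k) = a / k + b / (k + 1) := by
  rw [intervalIntegral.integral_add
      ((intervalIntegral.intervalIntegrable_rpow' (by linarith)).const_mul a)
      ((intervalIntegral.intervalIntegrable_rpow' (by linarith)).const_mul b),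
    intervalIntegral.integral_const_mul, intervalIntegral.integral_const_mul,
    integral_rpow (Or.inl (by linarith)), integral_rpow (Or.inl (by linarith)), sub_add_cancel,
    Real.zero_rpow hk.ne', Real.zero_rpow (by linarith)]
  simp [div_eq_mul_inv]

lemma rpow_sub_one_eq_rpow_sub_two_mul {s : ℝ} (hs : 0 < s) (k : ℝ) :
    s ^ (k - 1) = s ^ (k - 2) * s := by
  rw [← Real.rpow_add_one hs.ne']; ring_nf

lemma rpow_eq_rpow_sub_two_mul_sq {s : ℝ} (hs : 0 < s) (k : ℝ) : s ^ k = s ^ (k - 2) * s ^ 2 := by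
  rw [← Real.rpow_add_natCast hs.ne']; ring_nf

lemma hasDerivAt_rpow_mul_deriv_comp {β₁ β₂ : ℝ} (hβ₂ : β₂ ≠ 0) {p : ℂ → ℂ} {z : ℂ} {s : ℝ}
    (hs : 0 < s) (hp : DifferentiableAt ℂ (deriv p) (s * z)) :
    HasDerivAt (fun t : ℝ => ((t ^ (β₁ / β₂) : ℝ) : ℂ) * (β₂ * z * deriv p (t * z)))
      ((s ^ (β₁ / β₂ - 2) : ℝ) * eulerOp β₁ β₂ p (s * z)) s := by
  have hpow := (Real.hasDerivAt_rpow_const (p := β₁ / β₂) (Or.inl hs.ne')).ofReal_comp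
  have hline : HasDerivAt (fun t : ℝ => (t : ℂ) * z) z s := by
    simpa using (hasDerivAt_id s).ofReal_comp.mul_const z
  have hcomp := hp.hasDerivAt.comp s hline
  refine (hpow.mul (hcomp.const_mul _)).congr_deriv ?_
  rw [rpow_sub_one_eq_rpow_sub_two_mul hs, rpow_eq_rpow_sub_two_mul_sq hs (β₁ / β₂)]
  simp only [eulerOp, Function.comp_apply]
  generalize s ^ (β₁ / β₂ - 2) = c
  have : (β₂ : ℂ) ≠ 0 := by exact_mod_cast hβ₂
  push_cast
  field_simp

lemma ofReal_mul_mem_ball {z : ℂ} (hz : z ∈ ball (0 : ℂ) 1) {s : ℝ} (hs : s ∈ Icc (0 : ℝ) 1) :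
    (s : ℂ) * z ∈ ball (0 : ℂ) 1 := by
  rw [mem_ball_zero_iff, norm_mul, norm_real, Real.norm_of_nonneg hs.1]
  exact (mul_le_of_le_one_left (norm_nonneg z) hs.2).trans_lt (mem_ball_zero_iff.1 hz)

theorem norm_mul_deriv_le_of_norm_eulerOp_le {β₁ β₂ A B : ℝ} (hβ₁ : 0 < β₁) (hβ₂ : 0 < β₂)
    {p : ℂ → ℂ} (hp : AnalyticOnNhd ℂ p (ball 0 1))
    (hL : ∀ z ∈ ball (0 : ℂ) 1, ‖eulerOp β₁ β₂ p z‖ ≤ A * ‖z‖ + B * ‖z‖ ^ 2)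
    {z : ℂ} (hz : z ∈ ball (0 : ℂ) 1) :
    ‖z * deriv p z‖ ≤ A / β₁ * ‖z‖ + B / (β₁ + β₂) * ‖z‖ ^ 2 := by
  set k := β₁ / β₂
  have hk : 0 < k := div_pos hβ₁ hβ₂
  have hp' : ∀ s ∈ Icc (0 : ℝ) 1, ContinuousAt (fun t : ℝ => deriv p (t * z)) s := fun s hs =>
    ContinuousAt.comp (g := deriv p) (f := fun t : ℝ => (t : ℂ) * z)
      (hp.deriv _ (ofReal_mul_mem_ball hz hs)).continuousAt
      (continuous_ofReal.mul continuous_const).continuousAt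
  have hderiv : ∀ s ∈ Ioo (0 : ℝ) 1, HasDerivAt
      (fun t : ℝ => ((t ^ k : ℝ) : ℂ) * (β₂ * z * deriv p (t * z)))
      ((s ^ (k - 2) : ℝ) * eulerOp β₁ β₂ p (s * z)) s := fun s hs =>
    hasDerivAt_rpow_mul_deriv_comp hβ₂.ne' hs.1
      (hp.deriv _ (ofReal_mul_mem_ball hz (Ioo_subset_Icc_self hs))).differentiableAt
  have hbound : ∀ s ∈ Ioo (0 : ℝ) 1, ‖(s ^ (k - 2) : ℝ) * eulerOp β₁ β₂ p (s * z)‖ ≤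
      A * ‖z‖ * s ^ (k - 1) + B * ‖z‖ ^ 2 * s ^ k := by
    intro s ⟨hs0, hs1⟩
    have h := hL _ (ofReal_mul_mem_ball hz ⟨hs0.le, hs1.le⟩)
    simp only [norm_mul, norm_real, Real.norm_of_nonneg hs0.le,
      Real.norm_of_nonneg (Real.rpow_nonneg hs0.le _)] at h ⊢
    calc s ^ (k - 2) * ‖eulerOp β₁ β₂ p (s * z)‖
        ≤ s ^ (k - 2) * (A * (s * ‖z‖) + B * (s * ‖z‖) ^ 2) := by gcongr
      _ = A * ‖z‖ * s ^ (k - 1) + B * ‖z‖ ^ 2 * s ^ k := by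
        rw [rpow_sub_one_eq_rpow_sub_two_mul hs0, rpow_eq_rpow_sub_two_mul_sq hs0 k]
        ring
  have hftc := norm_sub_le_integral_of_norm_deriv_le_of_le zero_le_one
    (((continuous_ofReal.comp (Real.continuous_rpow_const hk.le)).continuousOn).mul
      (continuousOn_const.mul fun s hs => (hp' s hs).continuousWithinAt))
    (fun s hs => (hderiv s hs).differentiableAt.differentiableWithinAt)
    (Filter.Eventually.of_forall fun s hs => (hderiv s hs).deriv ▸ hbound s hs)
    (intervalIntegrable_mul_rpow_sub_one_add_mul_rpow hk _ _)
  rw [integral_mul_rpow_sub_one_add_mul_rpow hk] at hftc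
  simp only [Pi.mul_apply, Function.comp_apply, Real.one_rpow, Real.zero_rpow hk.ne', ofReal_one,
    ofReal_zero, one_mul, zero_mul, sub_zero, norm_mul, norm_real,
    Real.norm_of_nonneg hβ₂.le] at hftc
  have hscale : A * ‖z‖ / k + B * ‖z‖ ^ 2 / (k + 1) =
      β₂ * (A / β₁ * ‖z‖ + B / (β₁ + β₂) * ‖z‖ ^ 2) := by
    simp only [k]; field_simp
  rw [hscale] at hftc
  rw [norm_mul]
  exact le_of_mul_le_mul_left (by simpa [mul_assoc] using hftc) hβ₂

theorem norm_sub_le_of_norm_mul_deriv_le {A B : ℝ} {p : ℂ → ℂ}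
    (hp : DifferentiableOn ℂ p (ball 0 1))
    (h : ∀ z ∈ ball (0 : ℂ) 1, ‖z * deriv p z‖ ≤ A * ‖z‖ + B * ‖z‖ ^ 2)
    {z : ℂ} (hz : z ∈ ball (0 : ℂ) 1) : ‖p z - p 0‖ ≤ A * ‖z‖ + B / 2 * ‖z‖ ^ 2 := by
  have hderiv : ∀ t ∈ Icc (0 : ℝ) 1,
      HasDerivAt (fun t : ℝ => p (t * z)) (deriv p (t * z) * z) t := fun t ht =>
    ((hp.differentiableAt (isOpen_ball.mem_nhds (ofReal_mul_mem_ball hz ht))).hasDerivAt.comp t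
      (by simpa using (hasDerivAt_id t).ofReal_comp.mul_const z))
  have hbound : ∀ t ∈ Ioo (0 : ℝ) 1,
      ‖deriv p (t * z) * z‖ ≤ A * ‖z‖ * t ^ ((1 : ℝ) - 1) + B * ‖z‖ ^ 2 * t ^ (1 : ℝ) := by
    intro t ⟨ht0, ht1⟩
    have h' := h _ (ofReal_mul_mem_ball hz ⟨ht0.le, ht1.le⟩)
    simp only [norm_mul, norm_real, Real.norm_of_nonneg ht0.le] at h' ⊢
    rw [sub_self, Real.rpow_zero, Real.rpow_one]
    nlinarith
  have hftc := norm_sub_le_integral_of_norm_deriv_le_of_le zero_le_one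
    (fun t ht => (hderiv t ht).continuousAt.continuousWithinAt)
    (fun t ht => (hderiv t (Ioo_subset_Icc_self ht)).differentiableAt.differentiableWithinAt)
    (Filter.Eventually.of_forall fun t ht =>
      (hderiv t (Ioo_subset_Icc_self ht)).deriv ▸ hbound t ht)
    (intervalIntegrable_mul_rpow_sub_one_add_mul_rpow one_pos _ _)
  rw [integral_mul_rpow_sub_one_add_mul_rpow one_pos] at hftc
  simp only [ofReal_one, ofReal_zero, one_mul, zero_mul] at hftc
  exact hftc.trans_eq (by ring)

theorem norm_sub_one_lt_three_div_two_mul {β₁ β₂ : ℝ} (hβ₁ : 0 < β₁) (hβ₂ : 0 < β₂)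
    {p : ℂ → ℂ} (hp : AnalyticOnNhd ℂ p (ball 0 1)) (hp0 : p 0 = 1)
    (hL : ∀ z ∈ ball (0 : ℂ) 1, ‖eulerOp β₁ β₂ p z‖ ≤ ‖z‖ + ‖z‖ ^ 2)
    {z : ℂ} (hz : z ∈ ball (0 : ℂ) 1) : ‖p z - 1‖ < 3 / (2 * β₁) := by
  have hpz := norm_sub_le_of_norm_mul_deriv_le hp.differentiableOn
    (fun z hz => norm_mul_deriv_le_of_norm_eulerOp_le (A := 1) (B := 1) hβ₁ hβ₂ hp
      (fun z hz => by simpa using hL z hz) hz) hz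
  rw [hp0] at hpz
  have hz1 := mem_ball_zero_iff.1 hz
  have hquad : 1 / (β₁ + β₂) / 2 * ‖z‖ ^ 2 ≤ 1 / β₁ / 2 * ‖z‖ :=
    mul_le_mul (by gcongr; linarith) (by nlinarith [norm_nonneg z]) (sq_nonneg _) (by positivity)
  have h3 : 3 / (2 * β₁) = 1 / β₁ + 1 / β₁ / 2 := by field_simp; norm_num
  rw [h3]
  nlinarith [div_pos one_pos hβ₁]

theorem stmt3_general (β₁ β₂ : ℝ) (hβ₂ : 0 < β₂)
    (hcond : nu0 * (β₁ + β₂ * nu1) ≥ Real.sqrt 2)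
    (p : ℂ → ℂ) (hp : AnalyticOnNhd ℂ p (ball 0 1)) (hp0 : p 0 = 1)
    (hsub : ∀ z ∈ ball (0 : ℂ) 1,
      ‖(1 + (β₁ : ℂ) * z * deriv p z + (β₂ : ℂ) * z ^ 2 * deriv (deriv p) z) ^ 2 - 1‖ < 2 * ‖1 + (β₁ : ℂ) * z * deriv p z + (β₂ : ℂ) * z ^ 2 * deriv (deriv p) z‖) :
    ∀ z ∈ ball (0 : ℂ) 1, ∃ w ∈ ball (0 : ℂ) 1, p z = 1 + Complex.sin w := by
  have hβ := three_le_sqrt_two_mul hβ₂ hcond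
  have hβ₁ : 0 < β₁ := pos_of_mul_pos_right (by linarith) (Real.sqrt_nonneg 2)
  have hL : ∀ z ∈ ball (0 : ℂ) 1, ‖eulerOp β₁ β₂ p z‖ ≤ ‖z‖ + ‖z‖ ^ 2 := fun z hz => by
    simpa using norm_sub_one_le_of_norm_sq_sub_one_lt
      (W := fun z => 1 + eulerOp β₁ β₂ p z) ((hp.eulerOp β₁ β₂).differentiableOn.const_add 1)
      (by simp [eulerOp]) (fun z hz => by simpa only [eulerOp, add_assoc] using hsub z hz) hz
  intro z hz
  have hlt : ‖p z - 1‖ < √2 / 2 :=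
    (norm_sub_one_lt_three_div_two_mul hβ₁ hβ₂ hp hp0 hL hz).trans_le
      (by rw [div_le_div_iff₀ (by positivity) two_pos]; linarith)
  exact ⟨complexArcsin (p z - 1), mem_ball_zero_iff.2 (norm_complexArcsin_lt_one hlt),
    by rw [sin_complexArcsin]; ring⟩

theorem stmt3 (β₁ β₂ : ℝ) (hβ₁ : 0 < β₁) (hβ₂ : 0 < β₂)
    (hcond : nu0 * (β₁ + β₂ * nu1) ≥ Real.sqrt 2)
    (p : ℂ → ℂ) (hp : AnalyticOnNhd ℂ p (ball 0 1)) (hp0 : p 0 = 1)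
    (hsub : ∀ z ∈ ball (0 : ℂ) 1,
      ‖(1 + (β₁ : ℂ) * z * deriv p z + (β₂ : ℂ) * z ^ 2 * deriv (deriv p) z) ^ 2 - 1‖ < 2 * ‖1 + (β₁ : ℂ) * z * deriv p z + (β₂ : ℂ) * z ^ 2 * deriv (deriv p) z‖) :
    ∀ z ∈ ball (0 : ℂ) 1, ∃ w ∈ ball (0 : ℂ) 1, p z = 1 + Complex.sin w :=
  stmt3_general β₁ β₂ hβ₂ hcond p hp hp0 hsub
end

section
/- Let β₁, β₂ > 0 be real numbers satisfying 2β₁ − β₂ ≥ 4. Let p be analytic on the open unit disk 𝔻 with p(0) = 1, and suppose that for every z ∈ 𝔻 the value 1 + β₁·z·p′(z) + β₂·z²·p″(z) lies in the set {w ∈ ℂ : |w² − 1| < 2|w|}. Then for every z ∈ 𝔻, p(z) ∈ {1 + log(w + (1 + w²)^{1/2}) : w ∈ 𝔻}, i.e. p(z) ≺ 1 + sinh⁻¹ z. -/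
/-!
Put `q = 1 + β₁ z p' + β₂ z² p''`. On the lune `|w² - 1| < 2|w|` one has `| |w|² - 1 | < 2 |Re w|`,
so the lune misses the imaginary axis and its right half lies in the disc `|w - 1| < √2`. As
`q 0 = 1` and `𝔻` is connected, `q` maps `𝔻` into that disc, and the Schwarz lemma gives
`|q z - 1| ≤ √2 |z|`. On the ray `t ↦ t z`, `u t = z p'(t z)` satisfies the Euler equation
`k u + t u' = (q (t z) - 1) / (β₂ t)` with `k = β₁ / β₂`; integrating
`(t^k u)' = t^(k-1) (k u + t u')` gives `|u| ≤ √2 |z| / β₁`, hence `|p z - 1| ≤ √2 / β₁ ≤ 1 / √2` because `β₁ ≥ 2`. Finally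
`w = sinh (p z - 1)` has `|w|² ≤ sinh² |p z - 1| ≤ e^(1/2) - 1 < 1`, and `1 + sinh⁻¹ w = p z`
because `|Im (p z - 1)| < π / 2`.
-/

open Metric

open Set Filter Topology

section EulerEquation

variable {E : Type*} [NormedAddCommGroup E] [NormedSpace ℝ E]

theorem norm_rpow_smul_sub_rpow_smul_le {u u' : ℝ → E} {k M ε t : ℝ} (hk : 0 < k) (hε : 0 < ε)
    (hεt : ε ≤ t) (hu : ∀ s ∈ Icc ε t, HasDerivAt u (u' s) s)
    (hM : ∀ s ∈ Icc ε t, ‖k • u s + s • u' s‖ ≤ M) :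
    ‖t ^ k • u t - ε ^ k • u ε‖ ≤ M / k * (t ^ k - ε ^ k) := by
  have hderiv : ∀ s ∈ Icc ε t, HasDerivAt (fun x => x ^ k • u x - ε ^ k • u ε)
      (s ^ (k - 1) • (k • u s + s • u' s)) s := by
    intro s hs
    have hs0 : 0 < s := hε.trans_le hs.1
    refine (((Real.hasDerivAt_rpow_const (Or.inl hs0.ne')).smul (hu s hs)).sub_const
      (ε ^ k • u ε)).congr_deriv ?_
    rw [smul_add, smul_smul, smul_smul, mul_comm _ k, mul_comm _ s,
      ← Real.rpow_one_add' hs0.le (by linarith), add_sub_cancel, add_comm]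
  have hB : ∀ s ∈ Icc ε t, HasDerivAt (fun x => M / k * (x ^ k - ε ^ k)) (M * s ^ (k - 1)) s := by
    intro s hs
    refine (((Real.hasDerivAt_rpow_const (Or.inl (hε.trans_le hs.1).ne')).sub_const
      (ε ^ k)).const_mul (M / k)).congr_deriv ?_
    field_simp
  refine image_norm_le_of_norm_deriv_right_le_deriv_boundary'
    (fun s hs => (hderiv s hs).continuousAt.continuousWithinAt)
    (fun s hs => (hderiv s (Ico_subset_Icc_self hs)).hasDerivWithinAt) (by simp)
    (fun s hs => (hB s hs).continuousAt.continuousWithinAt)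
    (fun s hs => (hB s (Ico_subset_Icc_self hs)).hasDerivWithinAt) (fun s hs => ?_)
    ⟨hεt, le_rfl⟩
  have hs0 : 0 < s := hε.trans_le hs.1
  rw [norm_smul, Real.norm_of_nonneg (Real.rpow_nonneg hs0.le _), mul_comm]
  exact mul_le_mul_of_nonneg_right (hM s (Ico_subset_Icc_self hs)) (Real.rpow_nonneg hs0.le _)

theorem norm_le_of_norm_smul_add_smul_deriv_le {u u' : ℝ → E} {k M : ℝ} (hk : 0 < k)
    (hu : ∀ s ∈ Icc (0 : ℝ) 1, HasDerivAt u (u' s) s)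
    (hM : ∀ s ∈ Ioc (0 : ℝ) 1, ‖k • u s + s • u' s‖ ≤ M) :
    ∀ t ∈ Icc (0 : ℝ) 1, ‖u t‖ ≤ M / k := by
  have hu0 : Tendsto u (𝓝[>] 0) (𝓝 (u 0)) :=
    (hu 0 ⟨le_rfl, zero_le_one⟩).continuousAt.tendsto.mono_left nhdsWithin_le_nhds
  have hrpow : Tendsto (fun ε : ℝ => ε ^ k) (𝓝[>] 0) (𝓝 0) := by
    simpa [Real.zero_rpow hk.ne'] using
      (Real.continuousAt_rpow_const 0 k (Or.inr hk.le)).tendsto.mono_left nhdsWithin_le_nhds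
  -- `s ↦ s ^ k` need not be differentiable at `0`: fence on `[ε, t]`, then let `ε → 0`.
  have hpos : ∀ t ∈ Ioc (0 : ℝ) 1, ‖u t‖ ≤ M / k := by
    rintro t ⟨ht0, ht1⟩
    have hbound : ‖t ^ k • u t‖ ≤ M / k * t ^ k := by
      refine le_of_tendsto_of_tendsto
        (by simpa using (tendsto_const_nhds.sub (hrpow.smul hu0)).norm)
        (by simpa using (tendsto_const_nhds.sub hrpow).const_mul (M / k)) ?_
      filter_upwards [Ioc_mem_nhdsGT ht0] with ε hε
      exact norm_rpow_smul_sub_rpow_smul_le hk hε.1 hε.2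
        (fun s hs => hu s ⟨hε.1.le.trans hs.1, hs.2.trans ht1⟩)
        (fun s hs => hM s ⟨hε.1.trans_le hs.1, hs.2.trans ht1⟩)
    have htk : 0 < t ^ k := Real.rpow_pos_of_pos ht0 k
    rw [norm_smul, Real.norm_of_nonneg htk.le, mul_comm] at hbound
    exact le_of_mul_le_mul_right hbound htk
  intro t ht
  rcases ht.1.eq_or_lt with rfl | ht0
  · refine le_of_tendsto hu0.norm ?_
    filter_upwards [Ioc_mem_nhdsGT zero_lt_one] with s hs using hpos s hs
  · exact hpos t ⟨ht0, ht.2⟩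

end EulerEquation

theorem hasDerivAt_comp_ofReal_mul {f : ℂ → ℂ} {z : ℂ} {s : ℝ}
    (hf : DifferentiableAt ℂ f (s * z)) :
    HasDerivAt (fun t : ℝ => f (t * z)) (deriv f (s * z) * z) s :=
  (hf.hasDerivAt.comp (s : ℂ) (hasDerivAt_mul_const z)).comp_ofReal

theorem norm_sub_le_of_norm_euler_le {β₁ β₂ C : ℝ} (hβ₁ : 0 < β₁) (hβ₂ : 0 < β₂) {p : ℂ → ℂ}
    (hp : AnalyticOnNhd ℂ p (ball 0 1))
    (hbound : ∀ z ∈ ball (0 : ℂ) 1,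
      ‖β₁ * z * deriv p z + β₂ * z ^ 2 * deriv (deriv p) z‖ ≤ C * ‖z‖)
    {z : ℂ} (hz : z ∈ ball (0 : ℂ) 1) : ‖p z - p 0‖ ≤ C * ‖z‖ / β₁ := by
  have hmem : ∀ s ∈ Icc (0 : ℝ) 1, (s : ℂ) * z ∈ ball (0 : ℂ) 1 := by
    intro s hs
    rw [mem_ball_zero_iff] at hz ⊢
    rw [norm_mul, Complex.norm_real, Real.norm_of_nonneg hs.1]
    exact (mul_le_of_le_one_left (norm_nonneg z) hs.2).trans_lt hz
  have hu : ∀ s ∈ Icc (0 : ℝ) 1, HasDerivAt (fun t : ℝ => deriv p (t * z) * z)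
      (deriv (deriv p) (s * z) * z * z) s := fun s hs =>
    (hasDerivAt_comp_ofReal_mul (hp.deriv _ (hmem s hs)).differentiableAt).mul_const z
  have hM : ∀ s ∈ Ioc (0 : ℝ) 1, ‖(β₁ / β₂) • (deriv p (s * z) * z)
      + s • (deriv (deriv p) (s * z) * z * z)‖ ≤ C * ‖z‖ / β₂ := by
    rintro s ⟨hs0, hs1⟩
    have hrw : (β₁ / β₂) • (deriv p (s * z) * z) + s • (deriv (deriv p) (s * z) * z * z)
        = ((β₂ * s)⁻¹ : ℝ) • (β₁ * (s * z) * deriv p (s * z)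
          + β₂ * (s * z) ^ 2 * deriv (deriv p) (s * z)) := by
      have : (s : ℂ) ≠ 0 := by exact_mod_cast hs0.ne'
      have : (β₂ : ℂ) ≠ 0 := by exact_mod_cast hβ₂.ne'
      simp only [Complex.real_smul]
      push_cast
      field_simp
    have hsz := hbound _ (hmem s ⟨hs0.le, hs1⟩)
    rw [norm_mul, Complex.norm_real, Real.norm_of_nonneg hs0.le] at hsz
    rw [hrw, norm_smul, Real.norm_of_nonneg (by positivity)]
    calc (β₂ * s)⁻¹ * ‖_‖ ≤ (β₂ * s)⁻¹ * (C * (s * ‖z‖)) := by gcongr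
      _ = C * ‖z‖ / β₂ := by field_simp
  have hderiv := norm_le_of_norm_smul_add_smul_deriv_le (div_pos hβ₁ hβ₂) hu hM
  have hray := norm_image_sub_le_of_norm_deriv_le_segment_01'
    (f := fun t : ℝ => p (t * z)) (C := C * ‖z‖ / β₁)
    (fun s hs => (hasDerivAt_comp_ofReal_mul (hp _ (hmem s hs)).differentiableAt).hasDerivWithinAt)
    (fun s hs => (hderiv s (Ico_subset_Icc_self hs)).trans_eq (by field_simp))
  simpa using hray

theorem abs_normSq_sub_one_lt_of_lune {w : ℂ} (hw : ‖w ^ 2 - 1‖ < 2 * ‖w‖) :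
    |Complex.normSq w - 1| < 2 * |w.re| := by
  have hsq : Complex.normSq (w ^ 2 - 1) < Complex.normSq (2 * w) := by
    rw [← Complex.sq_norm, ← Complex.sq_norm, norm_mul, Complex.norm_two]
    gcongr
  rw [← abs_two, ← abs_mul, ← sq_lt_sq]
  simp only [Complex.normSq_apply, Complex.sub_re, Complex.sub_im, Complex.mul_re,
    Complex.mul_im, pow_two, Complex.one_re, Complex.one_im, Complex.re_ofNat,
    Complex.im_ofNat] at hsq ⊢
  nlinarith

theorem re_ne_zero_of_lune {w : ℂ} (hw : ‖w ^ 2 - 1‖ < 2 * ‖w‖) : w.re ≠ 0 := by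
  intro h
  simpa [h] using (abs_nonneg _).trans_lt (abs_normSq_sub_one_lt_of_lune hw)

theorem norm_sub_one_lt_sqrt_two_of_lune {w : ℂ} (hw : ‖w ^ 2 - 1‖ < 2 * ‖w‖)
    (hre : 0 < w.re) : ‖w - 1‖ < √2 := by
  have h := (le_abs_self _).trans_lt (abs_normSq_sub_one_lt_of_lune hw)
  rw [abs_of_pos hre] at h
  rw [← Real.sqrt_sq (norm_nonneg _), Complex.sq_norm]
  apply Real.sqrt_lt_sqrt (Complex.normSq_nonneg _)
  simp only [Complex.normSq_apply, Complex.sub_re, Complex.sub_im, Complex.one_re,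
    Complex.one_im] at h ⊢
  nlinarith

theorem norm_sub_one_le_of_mapsTo_lune {q : ℂ → ℂ} (hq : DifferentiableOn ℂ q (ball 0 1))
    (hq0 : q 0 = 1) (hlune : ∀ z ∈ ball (0 : ℂ) 1, ‖q z ^ 2 - 1‖ < 2 * ‖q z‖)
    {z : ℂ} (hz : z ∈ ball (0 : ℂ) 1) : ‖q z - 1‖ ≤ √2 * ‖z‖ := by
  have hre : ∀ z ∈ ball (0 : ℂ) 1, 0 < (q z).re := by
    intro z hz
    by_contra! h
    obtain ⟨c, hc, hc0⟩ := (convex_ball (0 : ℂ) 1).isPreconnected.intermediate_value hz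
      (mem_ball_self one_pos) (Complex.continuous_re.comp_continuousOn hq.continuousOn)
      ⟨h, by simp [hq0]⟩
    exact re_ne_zero_of_lune (hlune c hc) hc0
  have hmaps : MapsTo q (ball 0 1) (closedBall (q 0) √2) := fun z hz => by
    rw [mem_closedBall, hq0, Complex.dist_eq]
    exact (norm_sub_one_lt_sqrt_two_of_lune (hlune z hz) (hre z hz)).le
  simpa [hq0, Complex.dist_eq] using Complex.dist_le_div_mul_dist_of_mapsTo_ball hq hmaps hz

theorem Complex.norm_sinh_le (u : ℂ) : ‖sinh u‖ ≤ Real.sinh ‖u‖ :=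
  (hasSum_sinh u).norm_le_of_bounded (Real.hasSum_sinh ‖u‖) fun n => by
    rw [norm_div, norm_pow, Complex.norm_natCast]

theorem Real.sinh_sq_le (x : ℝ) : sinh x ^ 2 ≤ exp (x ^ 2) - 1 := by
  have h := pow_le_pow_left₀ (cosh_pos x).le (cosh_le_exp_half_sq x) 2
  rw [← exp_nat_mul, Nat.cast_ofNat, mul_div_cancel₀ _ two_ne_zero] at h
  linarith [cosh_sq' x]

theorem Complex.cosh_re (u : ℂ) : (cosh u).re = Real.cosh u.re * Real.cos u.im := by
  conv_lhs => rw [← re_add_im u]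
  rw [cosh_add, cosh_mul_I, sinh_mul_I, ← ofReal_cosh, ← ofReal_sinh]
  simp [cos_ofReal_re]

theorem Complex.log_sinh_add_cpow {u : ℂ} (hu : |u.im| < Real.pi / 2) :
    log (sinh u + (1 + sinh u ^ 2) ^ ((1 : ℂ) / 2)) = u := by
  have hcosh : 0 < (cosh u).re := by
    rw [cosh_re]
    exact mul_pos (Real.cosh_pos _) (Real.cos_pos_of_mem_Ioo (abs_lt.1 hu))
  rw [show 1 + sinh u ^ 2 = cosh u ^ 2 by rw [cosh_sq]; ring, one_div, sq_cpow_two_inv hcosh,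
    sinh_add_cosh]
  have := abs_lt.1 hu
  exact log_exp (by linarith [Real.pi_pos]) (by linarith [Real.pi_pos])

theorem exists_mem_ball_eq_log_add_cpow {u : ℂ} (hu : ‖u‖ ^ 2 ≤ 1 / 2) :
    ∃ w ∈ ball (0 : ℂ) 1, u = Complex.log (w + (1 + w ^ 2) ^ ((1 : ℂ) / 2)) := by
  have hu1 : ‖u‖ < 1 := by nlinarith [norm_nonneg u]
  refine ⟨Complex.sinh u, ?_, (Complex.log_sinh_add_cpow ?_).symm⟩
  · have hexp : Real.exp (1 / 2) < 2 := by
      rw [Real.exp_half, Real.sqrt_lt' two_pos]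
      linarith [Real.exp_one_lt_d9]
    rw [mem_ball_zero_iff, ← sq_lt_one_iff₀ (norm_nonneg _)]
    calc ‖Complex.sinh u‖ ^ 2 ≤ Real.sinh ‖u‖ ^ 2 := by
          gcongr
          exact Complex.norm_sinh_le u
      _ ≤ Real.exp (‖u‖ ^ 2) - 1 := Real.sinh_sq_le _
      _ ≤ Real.exp (1 / 2) - 1 := by gcongr
      _ < 1 := by linarith
  · linarith [Complex.abs_im_le_norm u, Real.pi_gt_three]

theorem stmt11_general (β₁ β₂ : ℝ) (hβ₂ : 0 < β₂)
    (hcond : (2 * β₁ - β₂) ≥ 4)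
    (p : ℂ → ℂ) (hp : AnalyticOnNhd ℂ p (ball 0 1)) (hp0 : p 0 = 1)
    (hsub : ∀ z ∈ ball (0 : ℂ) 1,
      ‖(1 + (β₁ : ℂ) * z * deriv p z + (β₂ : ℂ) * z ^ 2 * deriv (deriv p) z) ^ 2 - 1‖ < 2 * ‖1 + (β₁ : ℂ) * z * deriv p z + (β₂ : ℂ) * z ^ 2 * deriv (deriv p) z‖) :
    ∀ z ∈ ball (0 : ℂ) 1, ∃ w ∈ ball (0 : ℂ) 1, p z = 1 + Complex.log (w + (1 + w ^ 2) ^ ((1 : ℂ) / 2)) := by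
  intro z hz
  have hβ₁ : 2 ≤ β₁ := by linarith
  have hq : DifferentiableOn ℂ
      (fun z => 1 + (β₁ : ℂ) * z * deriv p z + (β₂ : ℂ) * z ^ 2 * deriv (deriv p) z) (ball 0 1) :=
    ((differentiableOn_const _).add ((differentiableOn_const _).mul differentiableOn_id |>.mul
      hp.deriv.differentiableOn)).add (((differentiableOn_const _).mul
      (differentiableOn_id.pow 2)).mul hp.deriv.deriv.differentiableOn)
  have hschwarz : ∀ z ∈ ball (0 : ℂ) 1,
      ‖(β₁ : ℂ) * z * deriv p z + (β₂ : ℂ) * z ^ 2 * deriv (deriv p) z‖ ≤ √2 * ‖z‖ :=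
    fun z hz => by simpa [add_assoc] using norm_sub_one_le_of_mapsTo_lune hq (by simp) hsub hz
  have hpz : ‖p z - 1‖ ^ 2 ≤ 1 / 2 := by
    have hz1 : ‖z‖ ≤ 1 := (mem_ball_zero_iff.1 hz).le
    calc ‖p z - 1‖ ^ 2 ≤ (√2 * ‖z‖ / β₁) ^ 2 := by
          gcongr
          simpa [hp0] using norm_sub_le_of_norm_euler_le (by linarith) hβ₂ hp hschwarz hz
      _ ≤ (√2 * 1 / 2) ^ 2 := by gcongr
      _ = 1 / 2 := by rw [mul_one, div_pow, Real.sq_sqrt zero_le_two]; norm_num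
  obtain ⟨w, hw, hpw⟩ := exists_mem_ball_eq_log_add_cpow hpz
  exact ⟨w, hw, by rw [← hpw]; ring⟩

theorem stmt11 (β₁ β₂ : ℝ) (hβ₁ : 0 < β₁) (hβ₂ : 0 < β₂)
    (hcond : (2 * β₁ - β₂) ≥ 4)
    (p : ℂ → ℂ) (hp : AnalyticOnNhd ℂ p (ball 0 1)) (hp0 : p 0 = 1)
    (hsub : ∀ z ∈ ball (0 : ℂ) 1,
      ‖(1 + (β₁ : ℂ) * z * deriv p z + (β₂ : ℂ) * z ^ 2 * deriv (deriv p) z) ^ 2 - 1‖ < 2 * ‖1 + (β₁ : ℂ) * z * deriv p z + (β₂ : ℂ) * z ^ 2 * deriv (deriv p) z‖) :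
    ∀ z ∈ ball (0 : ℂ) 1, ∃ w ∈ ball (0 : ℂ) 1, p z = 1 + Complex.log (w + (1 + w ^ 2) ^ ((1 : ℂ) / 2)) :=
  stmt11_general β₁ β₂ hβ₂ hcond p hp hp0 hsub
end

section
/- Let β₁, β₂ > 0 be real numbers satisfying 2β₁ − β₂ ≥ 2√2·sinh 1. Let p be analytic on the open unit disk 𝔻 with p(0) = 1, and suppose that for every z ∈ 𝔻 the value 1 + β₁·z·p′(z) + β₂·z²·p″(z) lies in the set {1 + sin w : w ∈ 𝔻}. Then for every z ∈ 𝔻, p(z) ∈ {1 + log(w + (1 + w²)^{1/2}) : w ∈ 𝔻}, i.e. p(z) ≺ 1 + sinh⁻¹ z. -/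
/-!
Put `k z = β₁ p'(z) + β₂ z p''(z)`. By hypothesis `z k(z) = sin w` with `|w| < 1`, and
`|sin w| ≤ sinh |w|`, so the Schwarz lemma gives `|k| ≤ sinh 1` on the disk. On each ray,
`f t = p'(t z)` solves the Euler-type equation `β₁ f + β₂ t f' = k(t z)`, whose solution is an
average of `k / β₁` (substitute `u = t ^ (β₁ / β₂)`); hence `|p'| ≤ sinh 1 / β₁ < 1 / √2` and
`|p z - 1| < 1 / √2 < arsinh 1`. Finally every `u` with `|u| < arsinh 1` is the principal value
of `arsinh (sinh u)`, with `|sinh u| ≤ sinh |u| < 1`.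
-/

open Metric Set

theorem Real.arsinh_one_lt_one : Real.arsinh 1 < 1 := by
  simpa only [Real.arsinh_sinh] using
    Real.arsinh_lt_arsinh.2 (Real.self_lt_sinh_iff.2 one_pos)

theorem Real.inv_sqrt_two_lt_arsinh_one : (√2)⁻¹ < Real.arsinh 1 := by
  have h2 : √2 ^ 2 = 2 := Real.sq_sqrt (by norm_num)
  have hs : (1.4 : ℝ) < √2 := by nlinarith [Real.sqrt_nonneg 2]
  have hs' : √2 < 1.5 := by nlinarith [Real.sqrt_nonneg 2]
  have harsinh : Real.arsinh 1 = Real.log (1 + √2) := by norm_num [Real.arsinh]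
  rw [harsinh, Real.lt_log_iff_exp_lt (by positivity)]
  calc Real.exp (√2)⁻¹ = Real.exp (√2 / 4) ^ 2 := by
        rw [← Real.exp_nat_mul]; congr 1; field_simp; push_cast; rw [h2]; norm_num
    _ < (1 / (1 - √2 / 4)) ^ 2 := by
        gcongr
        exact Real.exp_bound_div_one_sub_of_interval' (by positivity) (by linarith)
    _ ≤ 1 + √2 := by
        rw [div_pow, one_pow, div_le_iff₀ (pow_pos (by linarith) 2)]
        nlinarith

namespace Complex

theorem norm_sin_le_sinh_norm (z : ℂ) : ‖sin z‖ ≤ Real.sinh ‖z‖ :=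
  (hasSum_sin z).norm_le_of_bounded (Real.hasSum_sinh ‖z‖) fun n => by
    simp [norm_pow]

theorem norm_sinh_le_sinh_norm (z : ℂ) : ‖sinh z‖ ≤ Real.sinh ‖z‖ :=
  (hasSum_sinh z).norm_le_of_bounded (Real.hasSum_sinh ‖z‖) fun n => by
    simp [norm_pow]

theorem norm_le_div_of_norm_smul_le {E : Type*} [NormedAddCommGroup E] [NormedSpace ℂ E]
    {g : ℂ → E} {R M : ℝ} (hg : DifferentiableOn ℂ g (ball 0 R))
    (hM : ∀ z ∈ ball (0 : ℂ) R, ‖z • g z‖ ≤ M) {z : ℂ} (hz : z ∈ ball (0 : ℂ) R) :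
    ‖g z‖ ≤ M / R := by
  have hmaps : MapsTo (fun w => w • g w) (ball 0 R) (closedBall ((0 : ℂ) • g 0) M) := fun w hw => by
    simpa using hM w hw
  have hdslope : dslope (fun w => w • g w) 0 z = g z := by
    rcases eq_or_ne z 0 with rfl | hz0
    · rw [dslope_same]
      have hg0 := (hg.differentiableAt (ball_mem_nhds 0 (by simpa using hz))).hasDerivAt
      simpa using ((hasDerivAt_id' (0 : ℂ)).fun_smul hg0).deriv
    · simpa using dslope_sub_smul_of_ne g hz0
  rw [← hdslope]
  exact norm_dslope_le_div_of_mapsTo_ball (differentiableOn_id.smul hg) hmaps hz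

theorem cosh_re_pos {u : ℂ} (hu : |u.im| < Real.pi / 2) : 0 < (cosh u).re := by
  obtain ⟨x, y, rfl⟩ : ∃ x y : ℝ, u = x + y * I := ⟨u.re, u.im, (re_add_im u).symm⟩
  simp only [add_im, ofReal_im, mul_im, ofReal_re, I_im, mul_one, I_re, mul_zero, add_zero,
    zero_add] at hu
  have hcos : 0 < Real.cos y := Real.cos_pos_of_mem_Ioo ⟨by linarith [abs_lt.1 hu], (abs_lt.1 hu).2⟩
  simpa [cosh_add, cosh_mul_I, sinh_mul_I, ← ofReal_cosh, ← ofReal_cos, ← ofReal_sinh,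
    ← ofReal_sin] using mul_pos (Real.cosh_pos x) hcos

theorem exists_mem_ball_eq_log_add_sqrt {u : ℂ} (hu : ‖u‖ < Real.arsinh 1) :
    ∃ w ∈ ball (0 : ℂ) 1, u = log (w + (1 + w ^ 2) ^ ((1 : ℂ) / 2)) := by
  have him : |u.im| < Real.pi / 2 := (abs_im_le_norm u).trans_lt <|
    hu.trans (Real.arsinh_one_lt_one.trans (by linarith [Real.pi_gt_three]))
  refine ⟨sinh u, ?_, ?_⟩
  · rw [mem_ball_zero_iff]
    calc ‖sinh u‖ ≤ Real.sinh ‖u‖ := norm_sinh_le_sinh_norm u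
      _ < Real.sinh (Real.arsinh 1) := Real.sinh_lt_sinh.2 hu
      _ = 1 := Real.sinh_arsinh 1
  · have hsq : 1 + sinh u ^ 2 = cosh u ^ 2 := by rw [cosh_sq]; ring
    have him' := abs_lt.1 him
    rw [hsq, one_div, sq_cpow_two_inv (cosh_re_pos him), sinh_add_cosh,
      log_exp (by linarith [Real.pi_pos]) (by linarith [Real.pi_pos])]

end Complex

theorem norm_le_of_norm_smul_add_mul_smul_deriv_le {E : Type*} [NormedAddCommGroup E]
    [NormedSpace ℝ E] {χ χ' : ℝ → E} {α β M : ℝ} (hα : 0 < α) (hβ : 0 < β)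
    (hcont : ContinuousOn χ (Icc 0 1)) (hderiv : ∀ t ∈ Ioc (0 : ℝ) 1, HasDerivAt χ (χ' t) t)
    (hbound : ∀ t ∈ Ioc (0 : ℝ) 1, ‖α • χ t + (β * t) • χ' t‖ ≤ M) :
    ‖χ 1‖ ≤ M / α := by
  set γ := β / α with hγ
  have hγpos : 0 < γ := div_pos hβ hα
  have hmapsIcc : MapsTo (· ^ γ) (Icc (0 : ℝ) 1) (Icc 0 1) := fun u hu =>
    ⟨Real.rpow_nonneg hu.1 γ, Real.rpow_le_one hu.1 hu.2 hγpos.le⟩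
  have hmapsIoc : MapsTo (· ^ γ) (Ioc (0 : ℝ) 1) (Ioc 0 1) := fun u hu =>
    ⟨Real.rpow_pos_of_pos hu.1 γ, Real.rpow_le_one hu.1.le hu.2 hγpos.le⟩
  -- With `t = u ^ γ`, `H u = u • χ t` has derivative `α⁻¹ • (α • χ t + (β * t) • χ' t)`,
  -- so `χ 1 = H 1 - H 0` is controlled by the mean value inequality.
  set H : ℝ → E := fun u => u • χ (u ^ γ)
  set H' : ℝ → E := fun u => α⁻¹ • (α • χ (u ^ γ) + (β * u ^ γ) • χ' (u ^ γ))
  have hHcont : ContinuousOn H (Icc 0 1) :=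
    continuousOn_id.smul (hcont.comp (Real.continuous_rpow_const hγpos.le).continuousOn hmapsIcc)
  have hH : ∀ u ∈ Ioc (0 : ℝ) 1, HasDerivAt H (H' u) u := by
    intro u hu
    have hu0 : u ≠ 0 := hu.1.ne'
    have hpow := Real.hasDerivAt_rpow_const (x := u) (p := γ) (Or.inl hu0)
    refine ((hasDerivAt_id' u).fun_smul ((hderiv _ (hmapsIoc hu)).scomp u hpow)).congr_deriv ?_
    simp only [H', Function.comp_apply, one_smul, smul_add, smul_smul, inv_mul_cancel₀ hα.ne',
      Real.rpow_sub_one hu0]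
    rw [add_comm]
    congr 2
    rw [hγ]
    field_simp
  have hH'bound : ∀ u ∈ Ioc (0 : ℝ) 1, ‖H' u‖ ≤ M / α := fun u hu => by
    rw [norm_smul, norm_inv, Real.norm_of_nonneg hα.le, inv_mul_eq_div]
    exact div_le_div_of_nonneg_right (hbound _ (hmapsIoc hu)) hα.le
  have hflip : ∀ v ∈ Ico (0 : ℝ) 1, 1 - v ∈ Ioc (0 : ℝ) 1 := fun v hv =>
    ⟨by linarith [hv.2], by linarith [hv.1]⟩
  -- `H` need not be differentiable at `0`, so the mean value inequality runs from `1` to `0`.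
  have hmvt := norm_image_sub_le_of_norm_deriv_right_le_segment (f := fun v => H (1 - v))
    (hHcont.comp (continuous_const.sub continuous_id).continuousOn
      fun v hv => ⟨by linarith [hv.2], by linarith [hv.1]⟩)
    (fun v hv => ((hH _ (hflip v hv)).comp_const_sub 1 v).hasDerivWithinAt)
    (fun v hv => (norm_neg (H' (1 - v))).trans_le (hH'bound _ (hflip v hv)))
    1 (right_mem_Icc.2 zero_le_one)
  simpa [H] using hmvt

theorem StarConvex.norm_le_of_norm_mul_add_mul_deriv_le {s : Set ℂ} {f : ℂ → ℂ} {α β M : ℝ}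
    (hs : StarConvex ℝ 0 s) (hα : 0 < α) (hβ : 0 < β) (hf : ∀ z ∈ s, DifferentiableAt ℂ f z)
    (hbound : ∀ z ∈ s, ‖α * f z + β * z * deriv f z‖ ≤ M) {z : ℂ} (hz : z ∈ s) :
    ‖f z‖ ≤ M / α := by
  have hmem : ∀ t ∈ Icc (0 : ℝ) 1, (t : ℂ) * z ∈ s := fun t ht => by
    simpa [Complex.real_smul] using hs.smul_mem hz ht.1 ht.2
  have hderiv : ∀ t ∈ Icc (0 : ℝ) 1,
      HasDerivAt (fun t : ℝ => f (t * z)) (z * deriv f (t * z)) t := fun t ht =>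
    (((hf _ (hmem t ht)).hasDerivAt).scomp (t : ℂ) (hasDerivAt_mul_const z)).comp_ofReal
  simpa using norm_le_of_norm_smul_add_mul_smul_deriv_le hα hβ
    (fun t ht => (hderiv t ht).continuousAt.continuousWithinAt)
    (fun t ht => hderiv t (Ioc_subset_Icc_self ht)) fun t ht => by
      simpa [Complex.real_smul, ← mul_assoc] using hbound _ (hmem t (Ioc_subset_Icc_self ht))

theorem stmt12_general (β₁ β₂ : ℝ) (hβ₂ : 0 < β₂)
    (hcond : (2 * β₁ - β₂) ≥ 2 * Real.sqrt 2 * Real.sinh 1)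
    (p : ℂ → ℂ) (hp : AnalyticOnNhd ℂ p (ball 0 1)) (hp0 : p 0 = 1)
    (hsub : ∀ z ∈ ball (0 : ℂ) 1,
      ∃ w ∈ ball (0 : ℂ) 1, (1 + (β₁ : ℂ) * z * deriv p z + (β₂ : ℂ) * z ^ 2 * deriv (deriv p) z) = 1 + Complex.sin w) :
    ∀ z ∈ ball (0 : ℂ) 1, ∃ w ∈ ball (0 : ℂ) 1, p z = 1 + Complex.log (w + (1 + w ^ 2) ^ ((1 : ℂ) / 2)) := by
  have hβ₁ : √2 * Real.sinh 1 < β₁ := by linarith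
  have hβ₁pos : 0 < β₁ := lt_trans (by positivity) hβ₁
  set k : ℂ → ℂ := fun z => β₁ * deriv p z + β₂ * z * deriv (deriv p) z
  have hkdiff : DifferentiableOn ℂ k (ball 0 1) :=
    (hp.deriv.differentiableOn.const_mul _).add
      ((differentiableOn_id.const_mul _).mul hp.deriv.deriv.differentiableOn)
  have hzk : ∀ z ∈ ball (0 : ℂ) 1, ‖z • k z‖ ≤ Real.sinh 1 := fun z hz => by
    obtain ⟨w, hw, hzw⟩ := hsub z hz
    have hsin : z • k z = Complex.sin w := by simp only [k, smul_eq_mul]; linear_combination hzw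
    rw [hsin]
    exact (Complex.norm_sin_le_sinh_norm w).trans (Real.sinh_lt_sinh.2 (mem_ball_zero_iff.1 hw)).le
  have hk : ∀ z ∈ ball (0 : ℂ) 1, ‖k z‖ ≤ Real.sinh 1 := fun z hz => by
    simpa using Complex.norm_le_div_of_norm_smul_le hkdiff hzk hz
  have hp' : ∀ z ∈ ball (0 : ℂ) 1, ‖deriv p z‖ ≤ Real.sinh 1 / β₁ := fun z hz =>
    ((convex_ball 0 1).starConvex (mem_ball_self one_pos)).norm_le_of_norm_mul_add_mul_deriv_le
      hβ₁pos hβ₂ (fun w hw => (hp.deriv w hw).differentiableAt) hk hz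
  intro z hz
  have hmvt := (convex_ball (0 : ℂ) 1).norm_image_sub_le_of_norm_deriv_le
    (fun w hw => (hp w hw).differentiableAt) hp' (mem_ball_self one_pos) hz
  have hpz : ‖p z - 1‖ < Real.arsinh 1 := calc
    ‖p z - 1‖ ≤ Real.sinh 1 / β₁ * ‖z‖ := by simpa [hp0] using hmvt
    _ ≤ Real.sinh 1 / β₁ := mul_le_of_le_one_right (by positivity) (mem_ball_zero_iff.1 hz).le
    _ < (√2)⁻¹ := by
      rw [div_lt_iff₀ hβ₁pos, ← div_eq_inv_mul, lt_div_iff₀ (by positivity)]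
      linarith
    _ < Real.arsinh 1 := Real.inv_sqrt_two_lt_arsinh_one
  obtain ⟨w, hw, hpw⟩ := Complex.exists_mem_ball_eq_log_add_sqrt hpz
  exact ⟨w, hw, by rw [← hpw]; ring⟩

theorem stmt12 (β₁ β₂ : ℝ) (hβ₁ : 0 < β₁) (hβ₂ : 0 < β₂)
    (hcond : (2 * β₁ - β₂) ≥ 2 * Real.sqrt 2 * Real.sinh 1)
    (p : ℂ → ℂ) (hp : AnalyticOnNhd ℂ p (ball 0 1)) (hp0 : p 0 = 1)
    (hsub : ∀ z ∈ ball (0 : ℂ) 1,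
      ∃ w ∈ ball (0 : ℂ) 1, (1 + (β₁ : ℂ) * z * deriv p z + (β₂ : ℂ) * z ^ 2 * deriv (deriv p) z) = 1 + Complex.sin w) :
    ∀ z ∈ ball (0 : ℂ) 1, ∃ w ∈ ball (0 : ℂ) 1, p z = 1 + Complex.log (w + (1 + w ^ 2) ^ ((1 : ℂ) / 2)) :=
  stmt12_general β₁ β₂ hβ₂ hcond p hp hp0 hsub
end
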